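/- Let R > 0 and m_1, m_2 > 0, let c ∈ ℂ with Im c > 0, and let α > 0 with α ≠ 1. Then the pair of points (w_1, w_2) = (c, α c), which lie on the same half line through the origin, does not satisfy the hyperbolic relative-equilibrium equations with n = 2. -/

import Mathlib

open Complex ComplexConjugate Finset

/-- The quantity `Θ_{3,(k,j)}` appearing in the denominators of the equations of
motion of the curved `n`-body problem in the Poincaré upper half plane. -/
noncomputable def halfTheta (z w : ℂ) : ℝ :=
  (((conj z + z) * (conj w + w)
      - 2 * (((‖z‖ ^ 2 + ‖w‖ ^ 2 : ℝ)) : ℂ)) ^ 2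
    - (conj z - z) ^ 2 * (conj w - w) ^ 2).re

/-- The points `c k` satisfy the hyperbolic relative-equilibrium equations in the
Poincaré upper half plane with parameter `R` and masses `m`. -/
def HyperbolicRelEq (R : ℝ) {n : ℕ} (m : Fin n → ℝ) (c : Fin n → ℂ) : Prop :=
  ∀ k : Fin n,
    (R : ℂ) * (c k + conj (c k)) * c k / (8 * (c k - conj (c k)) ^ 4)
      = ∑ j ∈ Finset.univ.erase k,
          (m j : ℂ) * (c j - conj (c j)) ^ 2 * (c k - c j) * (conj (c j) - c k)
            / (((halfTheta (c k) (c j)) ^ ((3 : ℝ) / 2) : ℝ) : ℂ)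


/-!
Multiply the equation of the first body by `conj c`. Its left-hand side becomes real, since
`c + conj c`, `c * conj c` and `(c - conj c) ^ 4` are real. The single interaction term becomes
a real multiple of `α * conj c - c`, with a factor `1 - α` coming from `c - α * c`; its imaginary
part is `4 m₂ α² (1 - α²) (Im c)³ |c|² / Θ^{3/2}`, which is nonzero because
`Θ = 4 |z - w|² |z - w̄|²` is positive for distinct points of the upper half plane.
-/

theorem halfTheta_eq_four_mul_sq_norm_mul_sq_norm (z w : ℂ) :
    halfTheta z w = 4 * ‖z - w‖ ^ 2 * ‖z - conj w‖ ^ 2 := by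
  rw [halfTheta, ← ofReal_re (4 * ‖z - w‖ ^ 2 * ‖z - conj w‖ ^ 2)]
  congr 1
  push_cast
  simp only [← mul_conj', map_sub, conj_conj]
  ring

-- Without it `halfTheta _ _ ^ (3 / 2 : ℝ)` could be the junk value `0` of `Real.rpow`.
theorem halfTheta_pos {z w : ℂ} (hzw : z ≠ w) (hz : 0 < z.im) (hw : 0 < w.im) :
    0 < halfTheta z w := by
  have hconj : z - conj w ≠ 0 := fun h ↦ by
    have := congrArg im h
    simp only [sub_im, conj_im, sub_neg_eq_add, zero_im] at this
    linarith
  have := sub_ne_zero.2 hzw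
  rw [halfTheta_eq_four_mul_sq_norm_mul_sq_norm]
  positivity

theorem im_curvatureTerm_mul_conj (R : ℝ) (z : ℂ) :
    ((R : ℂ) * (z + conj z) * z / (8 * (z - conj z) ^ 4) * conj z).im = 0 := by
  rw [← conj_eq_iff_im]
  simp only [map_mul, map_div₀, map_add, map_sub, map_pow, map_ofNat, conj_conj, conj_ofReal]
  ring

theorem im_interactionTerm_mul_conj (m α T : ℝ) (z : ℂ) :
    ((m : ℂ) * (α * z - conj (α * z)) ^ 2 * (z - α * z) * (conj (α * z) - z) / (T : ℂ)
        * conj z).im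
      = 4 * m * α ^ 2 * (1 - α ^ 2) * z.im ^ 3 * normSq z / T := by
  have hsq : (z - conj z) ^ 2 = -4 * (z.im : ℂ) ^ 2 := by
    rw [sub_conj]
    push_cast
    linear_combination (4 * (z.im : ℂ) ^ 2) * I_sq
  have hreal : (m : ℂ) * (α * z - conj (α * z)) ^ 2 * (z - α * z) * (conj (α * z) - z) / (T : ℂ)
        * conj z = ((-4 * m * α ^ 2 * (1 - α) * z.im ^ 2 * normSq z / T : ℝ) : ℂ)
          * (α * conj z - z) := by
    rw [map_mul, conj_ofReal]
    push_cast
    linear_combination (m * α ^ 2 * (1 - α) * (α * conj z - z) / T : ℂ) *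
      ((z - conj z) ^ 2 * mul_conj z + normSq z * hsq)
  rw [hreal, im_ofReal_mul]
  simp only [sub_im, im_ofReal_mul, conj_im]
  ring

theorem no_hyperbolicRelEq_same_half_line_general (R m₁ m₂ : ℝ)
    (hm₂ : 0 < m₂)
    (c : ℂ) (hc : 0 < c.im) (α : ℝ) (hα : 0 < α) (hα1 : α ≠ 1) :
    ¬ HyperbolicRelEq R ![m₁, m₂] ![c, (α : ℂ) * c] := by
  intro h
  have h0 := congrArg (fun w ↦ (w * conj c).im) (h 0)
  have hsum : (univ.erase (0 : Fin 2)) = {1} := by decide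
  simp only [hsum, sum_singleton, Matrix.cons_val_zero, Matrix.cons_val_one,
    im_curvatureTerm_mul_conj, im_interactionTerm_mul_conj] at h0
  have hc0 : c ≠ 0 := fun h ↦ by simp [h] at hc
  have hθ : 0 < halfTheta c (α * c) :=
    halfTheta_pos (fun h ↦ hα1 (by exact_mod_cast (mul_eq_right₀ hc0).1 h.symm)) hc
      (by simpa using mul_pos hα hc)
  have hα2 : 1 - α ^ 2 ≠ 0 := fun h ↦
    hα1 ((pow_eq_one_iff_of_nonneg hα.le two_ne_zero).1 (by linarith))
  have := normSq_pos.2 hc0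
  have := Real.rpow_pos_of_pos hθ (3 / 2)
  exact (by positivity : 4 * m₂ * α ^ 2 * (1 - α ^ 2) * c.im ^ 3 * normSq c / _ ≠ 0) h0.symm

/-- There is no hyperbolic relative equilibrium of the curved 2-body problem in which
both bodies move along the same half line through the origin. -/
theorem no_hyperbolicRelEq_same_half_line (R m₁ m₂ : ℝ) (hR : 0 < R)
    (hm₁ : 0 < m₁) (hm₂ : 0 < m₂)
    (c : ℂ) (hc : 0 < c.im) (α : ℝ) (hα : 0 < α) (hα1 : α ≠ 1) :
    ¬ HyperbolicRelEq R ![m₁, m₂] ![c, (α : ℂ) * c] :=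
  no_hyperbolicRelEq_same_half_line_general R m₁ m₂ hm₂ c hc α hα hα1
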